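/- Let ν be a finite Borel measure on a compact metrizable space Z and let G be a group acting on Z by homeomorphisms, with a family of measures (ν_y)_{y∈Y} indexed by a set Y on which G acts, satisfying dν_y/dν_x(ξ) = e^{−V b(x,y,ξ)} with b continuous in ξ and b(x, y_n, ξ) → +∞ whenever y_n → ξ in an appropriate compactification. If sup_y ν_y(Z) < ∞, then ν_x has no atoms: ν_x({ξ}) = 0 for every ξ ∈ Z. -/
import Mathlib


open MeasureTheory Filter Topology
open scoped ENNReal

/-- Non-atomicity of Patterson–Sullivan-type measures (abstract form).  `Z` is a compact
metrizable space on which a group `G` acts by homeomorphisms, `(ν_y)_{y ∈ Y}` is a family of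
Borel measures on `Z` with Radon–Nikodym cocycle `dν_y/dν_x(ξ) = e^{−V b(x,y,ξ)}`, where
`b` is continuous in `ξ`, `V > 0`, and for each `x` and `ξ` there are points `y_n`
(converging to `ξ` in the appropriate compactification) along which `b(x, y_n, ξ) → −∞`
(so that the density at `ξ` blows up).  If `sup_y ν_y(Z) < ∞`, then each `ν_x` has no
atoms: `ν_x({ξ}) = 0` for every `ξ ∈ Z`. -/
theorem patterson_sullivan_no_atoms
    {Z : Type*} [MetricSpace Z] [CompactSpace Z] [MeasurableSpace Z] [BorelSpace Z]
    {Y : Type*} (G : Type*) [Group G] [MulAction G Z]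
    (hG : ∀ g : G, Continuous fun z : Z => g • z)
    (ν : Y → Measure Z) (b : Y → Y → Z → ℝ) (V : ℝ) (hV : 0 < V)
    (hcont : ∀ x y : Y, Continuous (b x y))
    (hcocycle : ∀ x y : Y,
      ν y = (ν x).withDensity fun ξ => ENNReal.ofReal (Real.exp (-V * b x y ξ)))
    (hblow : ∀ (x : Y) (ξ : Z), ∃ y : ℕ → Y,
      Tendsto (fun n => b x (y n) ξ) atTop atBot)
    (hbound : ∃ C : ℝ≥0∞, C ≠ ⊤ ∧ ∀ y : Y, ν y Set.univ ≤ C) :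
    ∀ (x : Y) (ξ : Z), ν x {ξ} = 0 := by
  intro x ξ
  by_contra h
  obtain ⟨C, hC, hCb⟩ := hbound
  obtain ⟨y, hy⟩ := hblow x ξ
  -- singleton measure under ν (y n)
  have key : ∀ n, ν (y n) {ξ} =
      ENNReal.ofReal (Real.exp (-V * b x (y n) ξ)) * ν x {ξ} := by
    intro n
    rw [hcocycle x (y n), withDensity_apply _ (measurableSet_singleton ξ),
      MeasureTheory.lintegral_singleton]
  -- exp blows up
  have hexp : Tendsto (fun n => Real.exp (-V * b x (y n) ξ)) atTop atTop := by
    apply Real.tendsto_exp_atTop.comp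
    exact ((tendsto_neg_atTop_iff.mpr hy).atTop_mul_const hV).congr (fun n => by ring)
  have hpos : 0 < ν x {ξ} := pos_iff_ne_zero.mpr h
  have htend : Tendsto (fun n => ν (y n) {ξ}) atTop (𝓝 ⊤) := by
    simp only [key]
    have h1 : Tendsto (fun n => ENNReal.ofReal (Real.exp (-V * b x (y n) ξ))) atTop (𝓝 ⊤) :=
      ENNReal.tendsto_ofReal_atTop.comp hexp
    have h2 := ENNReal.Tendsto.mul_const (b := ν x {ξ}) h1 (Or.inl (by simp))
    rwa [ENNReal.top_mul hpos.ne'] at h2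
  have hle : ∀ n, ν (y n) {ξ} ≤ C := fun n =>
    le_trans (measure_mono (Set.subset_univ _)) (hCb (y n))
  have : (⊤ : ℝ≥0∞) ≤ C := le_of_tendsto htend (Eventually.of_forall hle)
  exact hC (top_le_iff.mp this)
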